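/- arXiv:1512.09262 — 5 statements merged into one kernel-verified Lean document; each statement's English description precedes it below -/
import Mathlib

section
/- Let T > 0, let c : [0,T] → ℝ be continuous with c(t) ≥ 0, let α, β, d_f, d_b be nonnegative real constants, let p : ℝ → ℝ be Lipschitz continuous with Lipschitz constant L ≥ 0 and with p(ξ) ≥ 0 for ξ ≥ 0, and let r_{f0} ≥ 0, r_{b0} ≥ 0. If r_f, r_b : [0,T] → ℝ are continuously differentiable, nonnegative on [0,T], and satisfy r_f'(t) = p(r_b(t)) − α c(t) r_f(t) + β r_b(t) − d_f r_f(t) and r_b'(t) = α c(t) r_f(t) − β r_b(t) − d_b r_b(t) with r_f(0) = r_{f0}, r_b(0) = r_{b0}, then r_f(t) + r_b(t) ≤ (r_{f0} + r_{b0} + |p(0)| t) e^{L t} for all t ∈ [0,T]. In particular this bound is independent of c, α and β. -/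
open Set

/-- The receptor ODE system of the signalling model on the time interval `[0, T]`:
`r_f` (free receptors) and `r_b` (bound receptors) are continuously differentiable on `[0,T]`,
satisfy the two ODEs there, and take the prescribed initial values. -/
def IsReceptorSolution (T : ℝ) (c : ℝ → ℝ) (α β d_f d_b : ℝ) (p : ℝ → ℝ)
    (rf0 rb0 : ℝ) (rf rb : ℝ → ℝ) : Prop :=
  ContDiffOn ℝ 1 rf (Icc 0 T) ∧ ContDiffOn ℝ 1 rb (Icc 0 T) ∧
  (∀ t ∈ Icc 0 T,
    HasDerivWithinAt rf (p (rb t) - α * c t * rf t + β * rb t - d_f * rf t) (Icc 0 T) t) ∧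
  (∀ t ∈ Icc 0 T,
    HasDerivWithinAt rb (α * c t * rf t - β * rb t - d_b * rb t) (Icc 0 T) t) ∧
  rf 0 = rf0 ∧ rb 0 = rb0

/-- A Gronwall-type bound for the total receptor density `r_f + r_b`, independent of
`c`, `α` and `β`. -/
theorem stmt_2 (T : ℝ) (hT : 0 < T) (c : ℝ → ℝ) (hc : ContinuousOn c (Icc 0 T))
    (hcpos : ∀ t ∈ Icc 0 T, 0 ≤ c t)
    (α β d_f d_b : ℝ) (hα : 0 ≤ α) (hβ : 0 ≤ β) (hdf : 0 ≤ d_f) (hdb : 0 ≤ d_b)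
    (L : ℝ) (hL : 0 ≤ L) (p : ℝ → ℝ) (hp : LipschitzWith L.toNNReal p)
    (hppos : ∀ ξ : ℝ, 0 ≤ ξ → 0 ≤ p ξ)
    (rf0 rb0 : ℝ) (hrf0 : 0 ≤ rf0) (hrb0 : 0 ≤ rb0)
    (rf rb : ℝ → ℝ) (hsol : IsReceptorSolution T c α β d_f d_b p rf0 rb0 rf rb)
    (hrfpos : ∀ t ∈ Icc 0 T, 0 ≤ rf t) (hrbpos : ∀ t ∈ Icc 0 T, 0 ≤ rb t) :
    ∀ t ∈ Icc 0 T, rf t + rb t ≤ (rf0 + rb0 + |p 0| * t) * Real.exp (L * t) := by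
  obtain ⟨hrfC, hrbC, hrf', hrb', hrf0', hrb0'⟩ := hsol
  set s : ℝ → ℝ := fun t => rf t + rb t with hs
  set s' : ℝ → ℝ := fun t => p (rb t) - d_f * rf t - d_b * rb t with hs'
  have hsC : ContinuousOn s (Icc 0 T) := hrfC.continuousOn.add hrbC.continuousOn
  have hsderiv : ∀ x ∈ Ico 0 T, HasDerivWithinAt s (s' x) (Ici x) x := by
    intro x hx
    have hx' : x ∈ Icc 0 T := ⟨hx.1, hx.2.le⟩
    have h1 := (hrf' x hx').add (hrb' x hx')
    have h2 : (p (rb x) - α * c x * rf x + β * rb x - d_f * rf x) +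
        (α * c x * rf x - β * rb x - d_b * rb x) = s' x := by simp [hs']; ring
    rw [h2] at h1
    have hmem : Icc 0 T ∈ nhdsWithin x (Ici x) := by
      have : Icc x T ∈ nhdsWithin x (Ici x) :=
        Icc_mem_nhdsGE_of_mem ⟨le_refl x, hx.2⟩
      exact Filter.mem_of_superset this (Icc_subset_Icc hx.1 le_rfl)
    exact h1.mono_of_mem_nhdsWithin hmem
  have hbound : ∀ x ∈ Ico 0 T, s' x ≤ L * s x + |p 0| := by
    intro x hx
    have hx' : x ∈ Icc 0 T := ⟨hx.1, hx.2.le⟩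
    have hrfx := hrfpos x hx'
    have hrbx := hrbpos x hx'
    have hlip : |p (rb x) - p 0| ≤ L * |rb x| := by
      have := hp.dist_le_mul (rb x) 0
      simpa [Real.dist_eq, Real.coe_toNNReal L hL] using this
    have h3 : p (rb x) ≤ |p 0| + L * rb x := by
      have h4 : p (rb x) - p 0 ≤ L * |rb x| := (le_abs_self _).trans hlip
      rw [abs_of_nonneg hrbx] at h4
      have : p 0 ≤ |p 0| := le_abs_self _
      linarith
    have : s' x = p (rb x) - d_f * rf x - d_b * rb x := rfl
    have hLs : L * rb x ≤ L * s x := by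
      have : rb x ≤ s x := by simp [hs]; linarith
      exact mul_le_mul_of_nonneg_left this hL
    nlinarith [mul_nonneg hdf hrfx, mul_nonneg hdb hrbx]
  have hgr := le_gronwallBound_of_liminf_deriv_right_le (f' := s') (δ := rf0 + rb0) (K := L) (ε := |p 0|) hsC
    (fun x hx r hr => (hsderiv x hx).liminf_right_slope_le hr)
    (by simp [hs, hrf0', hrb0']) hbound
  intro t ht
  have h5 := hgr t ht
  rw [sub_zero] at h5
  have ht0 : 0 ≤ t := ht.1
  have key : gronwallBound (rf0 + rb0) L (|p 0|) t ≤
      (rf0 + rb0 + |p 0| * t) * Real.exp (L * t) := by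
    rcases eq_or_ne L 0 with h | h
    · simp [h, gronwallBound_K0]
    · rw [gronwallBound_of_K_ne_0 h]
      have hLpos : 0 < L := lt_of_le_of_ne hL (Ne.symm h)
      have hexp : Real.exp (L * t) - 1 ≤ L * t * Real.exp (L * t) := by
        have h1 : (1 - L * t) * Real.exp (L * t) ≤ 1 := by
          calc (1 - L * t) * Real.exp (L * t)
              ≤ Real.exp (-(L * t)) * Real.exp (L * t) := by
                nlinarith [Real.add_one_le_exp (-(L * t)), Real.exp_pos (L * t)]
            _ = 1 := by rw [← Real.exp_add]; simp
        nlinarith [Real.exp_pos (L * t)]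
      have h6 : |p 0| / L * (Real.exp (L * t) - 1) ≤ |p 0| * t * Real.exp (L * t) := by
        rw [div_mul_eq_mul_div, div_le_iff₀ hLpos]
        nlinarith [abs_nonneg (p 0)]
      nlinarith [Real.exp_pos (L * t)]
  exact h5.trans key
end

section
/- Let T > 0, let α, β, d_f, d_b be nonnegative real constants, let p : ℝ → ℝ be Lipschitz continuous with constant L, and let R₀, R₁ > 0. Let c₁, c₂ : [0,T] → ℝ be continuous with 0 ≤ cᵢ(t) ≤ R₁, and for i = 1,2 let (r_{f,i}, r_{b,i}) be continuously differentiable solutions on [0,T] of r_{f,i}' = p(r_{b,i}) − α cᵢ r_{f,i} + β r_{b,i} − d_f r_{f,i}, r_{b,i}' = α cᵢ r_{f,i} − β r_{b,i} − d_b r_{b,i}, with the same nonnegative initial data r_{f,1}(0) = r_{f,2}(0) and r_{b,1}(0) = r_{b,2}(0), and with 0 ≤ r_{f,i}(t), r_{b,i}(t) ≤ R₀ on [0,T]. Then there is a constant μ, depending only on α, β, d_f, d_b, L, R₀, R₁ and T, such that |r_{f,1}(t) − r_{f,2}(t)|² + |r_{b,1}(t) − r_{b,2}(t)|² ≤ μ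 ∫₀ᵗ |c₁(s) − c₂(s)|² ds for all t ∈ [0,T]. -/
/-!
Write `u = r_{f,1} - r_{f,2}`, `v = r_{b,1} - r_{b,2}`, `w = c₁ - c₂` and `E = u² + v²`.
Splitting `c₁ r_{f,1} - c₂ r_{f,2} = c₁ u + r_{f,2} w` and using the Lipschitz bound on `p`
and Young's inequality, the ODEs give `E' ≤ K E + α R₀ w²` with
`K = L + α R₁ + β + 2 α R₀`. Since `E(0) = 0`, Gronwall's inequality yields
`E(t) ≤ α R₀ e^{K T} ∫₀ᵗ w²`.
-/

open Set Real

theorem ContinuousOn.hasDerivWithinAt_integral_Icc {E : Type*} [NormedAddCommGroup E]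
    [NormedSpace ℝ E] [CompleteSpace E] {f : ℝ → E} {a b t : ℝ}
    (hf : ContinuousOn f (Icc a b)) (ht : t ∈ Icc a b) :
    HasDerivWithinAt (fun u => ∫ x in a..u, f x) (f t) (Icc a b) t := by
  have : Fact (t ∈ Icc a b) := ⟨ht⟩
  refine intervalIntegral.integral_hasDerivWithinAt_right ?_
    (hf.stronglyMeasurableAtFilter_nhdsWithin measurableSet_Icc t) (hf t ht)
  exact (hf.mono (uIcc_subset_Icc (left_mem_Icc.2 (ht.1.trans ht.2)) ht)).intervalIntegrable

theorem le_exp_mul_add_integral_of_hasDerivWithinAt {E E' g : ℝ → ℝ} {K a b t : ℝ}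
    (hK : 0 ≤ K) (hg : ContinuousOn g (Icc a b)) (hg₀ : ∀ s ∈ Icc a b, 0 ≤ g s)
    (hE : ∀ s ∈ Icc a b, HasDerivWithinAt E (E' s) (Icc a b) s)
    (hE' : ∀ s ∈ Icc a b, E' s ≤ K * E s + g s) (ht : t ∈ Icc a b) :
    E t ≤ exp (K * (t - a)) * (E a + ∫ s in a..t, g s) := by
  set w : ℝ → ℝ := fun s => exp (-(K * (s - a)))
  have hw : ∀ s, HasDerivAt w (w s * -K) s := fun s => by
    simpa using (((hasDerivAt_id s).sub_const a).const_mul K).neg.exp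
  have hwg : ContinuousOn (fun s => w s * g s) (Icc a b) :=
    (by fun_prop : Continuous w).continuousOn.mul hg
  -- `w` is an integrating factor: `H' = w (E' - K E - g) ≤ 0`.
  set H : ℝ → ℝ := fun s => w s * E s - ∫ x in a..s, w x * g x
  have hH : ∀ s ∈ Icc a b, HasDerivWithinAt H (w s * (E' s - K * E s - g s)) (Icc a b) s :=
    fun s hs => (((hw s).hasDerivWithinAt.mul (hE s hs)).sub
      (hwg.hasDerivWithinAt_integral_Icc hs)).congr_deriv (by ring)
  have hH_anti : AntitoneOn H (Icc a b) := by
    refine antitoneOn_of_hasDerivWithinAt_nonpos (convex_Icc a b)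
      (fun s hs => (hH s hs).continuousWithinAt)
      (fun s hs => (hH s (interior_subset hs)).mono interior_subset) fun s hs => ?_
    have := hE' s (interior_subset hs)
    exact mul_nonpos_of_nonneg_of_nonpos (exp_pos _).le (by linarith)
  have hHt : w t * E t ≤ E a + ∫ x in a..t, w x * g x := by
    have := hH_anti (left_mem_Icc.2 (ht.1.trans ht.2)) ht ht.1
    simp only [H, w, sub_self, mul_zero, neg_zero, exp_zero, one_mul,
      intervalIntegral.integral_same, sub_zero] at this
    linarith
  have hwg_le : ∫ x in a..t, w x * g x ≤ ∫ x in a..t, g x := by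
    have hsub : uIcc a t ⊆ Icc a b := uIcc_subset_Icc (left_mem_Icc.2 (ht.1.trans ht.2)) ht
    refine intervalIntegral.integral_mono_on ht.1 ((hwg.mono hsub).intervalIntegrable)
      ((hg.mono hsub).intervalIntegrable) fun x hx => ?_
    have hxab : x ∈ Icc a b := ⟨hx.1, hx.2.trans ht.2⟩
    exact mul_le_of_le_one_left (hg₀ x hxab)
      (exp_le_one_iff.2 (neg_nonpos.2 (mul_nonneg hK (sub_nonneg.2 hx.1))))
  calc E t = exp (K * (t - a)) * (w t * E t) := by
        rw [← mul_assoc, ← exp_add, add_neg_cancel, exp_zero, one_mul]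
    _ ≤ exp (K * (t - a)) * (E a + ∫ s in a..t, g s) := by
        gcongr
        linarith

theorem receptor_energy_rate_le {α β d_f d_b L R₀ R₁ c₁ c₂ f₁ f₂ b₁ b₂ D : ℝ}
    (hα : 0 ≤ α) (hβ : 0 ≤ β) (hdf : 0 ≤ d_f) (hdb : 0 ≤ d_b) (hL : 0 ≤ L)
    (hc₁ : 0 ≤ c₁) (hc₁R : c₁ ≤ R₁) (hf₂ : 0 ≤ f₂) (hf₂R : f₂ ≤ R₀)
    (hD : |D| ≤ L * |b₁ - b₂|) :
    2 * (f₁ - f₂) * (D - α * (c₁ * f₁ - c₂ * f₂) + β * (b₁ - b₂) - d_f * (f₁ - f₂))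
        + 2 * (b₁ - b₂) * (α * (c₁ * f₁ - c₂ * f₂) - β * (b₁ - b₂) - d_b * (b₁ - b₂))
      ≤ (L + α * R₁ + β + 2 * α * R₀) * ((f₁ - f₂) ^ 2 + (b₁ - b₂) ^ 2)
        + α * R₀ * (c₁ - c₂) ^ 2 := by
  set u := f₁ - f₂
  set v := b₁ - b₂
  set w := c₁ - c₂
  have hsplit : c₁ * f₁ - c₂ * f₂ = c₁ * u + f₂ * w := by ring
  have hLip : 2 * u * D ≤ L * (u ^ 2 + v ^ 2) := by
    have : |u| * |D| ≤ |u| * (L * |v|) := mul_le_mul_of_nonneg_left hD (abs_nonneg u)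
    nlinarith [le_abs_self (u * D), abs_mul u D, mul_nonneg hL (sq_nonneg (|u| - |v|)),
      sq_abs u, sq_abs v]
  have hαc₁ : 0 ≤ α * c₁ := mul_nonneg hα hc₁
  have hαf₂ : 0 ≤ α * f₂ := mul_nonneg hα hf₂
  have hbind : 2 * (α * c₁) * u * (v - u) ≤ α * R₁ * v ^ 2 := by
    linear_combination mul_nonneg hαc₁ (sq_nonneg (u - v)) + mul_nonneg hαc₁ (sq_nonneg u)
      + mul_nonneg (mul_nonneg hα (sub_nonneg.2 hc₁R)) (sq_nonneg v)
  have hdiss : 2 * β * v * (u - v) ≤ β * u ^ 2 := by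
    linear_combination mul_nonneg hβ (sq_nonneg (u - v)) + mul_nonneg hβ (sq_nonneg v)
  have hligand : 2 * (α * f₂) * w * (v - u) ≤ α * R₀ * (w ^ 2 + 2 * u ^ 2 + 2 * v ^ 2) := by
    linear_combination mul_nonneg hαf₂ (sq_nonneg (w - (v - u)))
      + mul_nonneg hαf₂ (sq_nonneg (u + v))
      + mul_nonneg (mul_nonneg hα (sub_nonneg.2 hf₂R))
        (by positivity : 0 ≤ w ^ 2 + 2 * u ^ 2 + 2 * v ^ 2)
  rw [hsplit]
  linear_combination hLip + hbind + hdiss + hligand + 2 * mul_nonneg hdf (sq_nonneg u)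
    + 2 * mul_nonneg hdb (sq_nonneg v) + mul_nonneg (mul_nonneg hα (hc₁.trans hc₁R)) (sq_nonneg u)
    + mul_nonneg hβ (sq_nonneg v)

theorem stmt_3_general (T α β d_f d_b L R₀ R₁ : ℝ)
    (hα : 0 ≤ α) (hβ : 0 ≤ β) (hdf : 0 ≤ d_f) (hdb : 0 ≤ d_b)
    (hL : 0 ≤ L) (hR₀ : 0 < R₀) (hR₁ : 0 < R₁) :
    ∃ μ : ℝ, ∀ p : ℝ → ℝ, LipschitzWith L.toNNReal p →
      ∀ c₁ c₂ : ℝ → ℝ, ContinuousOn c₁ (Icc 0 T) → ContinuousOn c₂ (Icc 0 T) →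
        (∀ t ∈ Icc 0 T, 0 ≤ c₁ t ∧ c₁ t ≤ R₁) →
        (∀ t ∈ Icc 0 T, 0 ≤ c₂ t ∧ c₂ t ≤ R₁) →
        ∀ rf₁ rb₁ rf₂ rb₂ : ℝ → ℝ,
          IsReceptorSolution T c₁ α β d_f d_b p (rf₁ 0) (rb₁ 0) rf₁ rb₁ →
          IsReceptorSolution T c₂ α β d_f d_b p (rf₂ 0) (rb₂ 0) rf₂ rb₂ →
          rf₁ 0 = rf₂ 0 → rb₁ 0 = rb₂ 0 → 0 ≤ rf₁ 0 → 0 ≤ rb₁ 0 →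
          (∀ t ∈ Icc 0 T, 0 ≤ rf₁ t ∧ rf₁ t ≤ R₀) →
          (∀ t ∈ Icc 0 T, 0 ≤ rb₁ t ∧ rb₁ t ≤ R₀) →
          (∀ t ∈ Icc 0 T, 0 ≤ rf₂ t ∧ rf₂ t ≤ R₀) →
          (∀ t ∈ Icc 0 T, 0 ≤ rb₂ t ∧ rb₂ t ≤ R₀) →
          ∀ t ∈ Icc 0 T,
            |rf₁ t - rf₂ t| ^ 2 + |rb₁ t - rb₂ t| ^ 2 ≤
              μ * ∫ s in (0:ℝ)..t, |c₁ s - c₂ s| ^ 2 := by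
  set K := L + α * R₁ + β + 2 * α * R₀
  refine ⟨α * R₀ * exp (K * T), fun p hp c₁ c₂ hc₁ hc₂ hc₁b _ rf₁ rb₁ rf₂ rb₂ hsol₁ hsol₂
    hrf₀ hrb₀ _ _ _ _ hrf₂b _ t ht => ?_⟩
  obtain ⟨-, -, hrf₁', hrb₁', -, -⟩ := hsol₁
  obtain ⟨-, -, hrf₂', hrb₂', -, -⟩ := hsol₂
  have hK : 0 ≤ K := by positivity
  have hlip : ∀ x y, |p x - p y| ≤ L * |x - y| := fun x y => by
    simpa [Real.dist_eq, Real.coe_toNNReal L hL] using hp.dist_le_mul x y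
  have hgronwall := le_exp_mul_add_integral_of_hasDerivWithinAt
    (E := fun s => (rf₁ s - rf₂ s) ^ 2 + (rb₁ s - rb₂ s) ^ 2) hK
    (g := fun s => α * R₀ * |c₁ s - c₂ s| ^ 2)
    (by fun_prop) (fun s _ => by positivity)
    (fun s hs => ((((hrf₁' s hs).sub (hrf₂' s hs)).pow 2).add
      (((hrb₁' s hs).sub (hrb₂' s hs)).pow 2)))
    (fun s hs => by
      simp only [sq_abs, Pi.sub_apply, Nat.cast_ofNat]
      have := receptor_energy_rate_le hα hβ hdf hdb hL (hc₁b s hs).1 (hc₁b s hs).2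
        (hrf₂b s hs).1 (hrf₂b s hs).2 (hlip (rb₁ s) (rb₂ s)) (c₂ := c₂ s) (f₁ := rf₁ s)
      linear_combination this) ht
  have hint_nonneg : 0 ≤ ∫ s in (0:ℝ)..t, |c₁ s - c₂ s| ^ 2 :=
    intervalIntegral.integral_nonneg ht.1 fun s _ => by positivity
  calc |rf₁ t - rf₂ t| ^ 2 + |rb₁ t - rb₂ t| ^ 2
      = (rf₁ t - rf₂ t) ^ 2 + (rb₁ t - rb₂ t) ^ 2 := by simp only [sq_abs]
    _ ≤ exp (K * t) * (α * R₀ * ∫ s in (0:ℝ)..t, |c₁ s - c₂ s| ^ 2) := by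
        simpa [hrf₀, hrb₀, intervalIntegral.integral_const_mul] using hgronwall
    _ ≤ exp (K * T) * (α * R₀ * ∫ s in (0:ℝ)..t, |c₁ s - c₂ s| ^ 2) := by
        gcongr
        exact ht.2
    _ = α * R₀ * exp (K * T) * ∫ s in (0:ℝ)..t, |c₁ s - c₂ s| ^ 2 := by ring

/-- Gronwall-type continuous-dependence estimate of the receptor densities on the
ligand concentration `c`: the constant `μ` depends only on `α, β, d_f, d_b, L, R₀, R₁, T`. -/
theorem stmt_3 (T α β d_f d_b L R₀ R₁ : ℝ) (hT : 0 < T)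
    (hα : 0 ≤ α) (hβ : 0 ≤ β) (hdf : 0 ≤ d_f) (hdb : 0 ≤ d_b)
    (hL : 0 ≤ L) (hR₀ : 0 < R₀) (hR₁ : 0 < R₁) :
    ∃ μ : ℝ, ∀ p : ℝ → ℝ, LipschitzWith L.toNNReal p →
      ∀ c₁ c₂ : ℝ → ℝ, ContinuousOn c₁ (Icc 0 T) → ContinuousOn c₂ (Icc 0 T) →
        (∀ t ∈ Icc 0 T, 0 ≤ c₁ t ∧ c₁ t ≤ R₁) →
        (∀ t ∈ Icc 0 T, 0 ≤ c₂ t ∧ c₂ t ≤ R₁) →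
        ∀ rf₁ rb₁ rf₂ rb₂ : ℝ → ℝ,
          IsReceptorSolution T c₁ α β d_f d_b p (rf₁ 0) (rb₁ 0) rf₁ rb₁ →
          IsReceptorSolution T c₂ α β d_f d_b p (rf₂ 0) (rb₂ 0) rf₂ rb₂ →
          rf₁ 0 = rf₂ 0 → rb₁ 0 = rb₂ 0 → 0 ≤ rf₁ 0 → 0 ≤ rb₁ 0 →
          (∀ t ∈ Icc 0 T, 0 ≤ rf₁ t ∧ rf₁ t ≤ R₀) →
          (∀ t ∈ Icc 0 T, 0 ≤ rb₁ t ∧ rb₁ t ≤ R₀) →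
          (∀ t ∈ Icc 0 T, 0 ≤ rf₂ t ∧ rf₂ t ≤ R₀) →
          (∀ t ∈ Icc 0 T, 0 ≤ rb₂ t ∧ rb₂ t ≤ R₀) →
          ∀ t ∈ Icc 0 T,
            |rf₁ t - rf₂ t| ^ 2 + |rb₁ t - rb₂ t| ^ 2 ≤
              μ * ∫ s in (0:ℝ)..t, |c₁ s - c₂ s| ^ 2 :=
  stmt_3_general T α β d_f d_b L R₀ R₁ hα hβ hdf hdb hL hR₀ hR₁
end

section
/- Let T > 0, let d_f, d_b be nonnegative real constants, let p : ℝ → ℝ be Lipschitz continuous with constant L, and let R₀, R₁, R₂ > 0. Let c : [0,T] → ℝ be continuous with 0 ≤ c(t) ≤ R₁, let α₁, β₁, α₂, β₂ ∈ [0, R₂], and for i = 1,2 let (r_{f,i}, r_{b,i}) be continuously differentiable solutions on [0,T] of r_{f,i}' = p(r_{b,i}) − αᵢ c r_{f,i} + βᵢ r_{b,i} − d_f r_{f,i}, r_{b,i}' = αᵢ c r_{f,i} − βᵢ r_{b,i} − d_b r_{b,i}, with the same nonnegative initial data and with 0 ≤ r_{f,i}(t), r_{b,i}(t) ≤ R₀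 on [0,T]. Then there is a constant μ, depending only on d_f, d_b, L, R₀, R₁, R₂ and T, such that |r_{f,1}(t) − r_{f,2}(t)| + |r_{b,1}(t) − r_{b,2}(t)| ≤ μ (|α₁ − α₂| + |β₁ − β₂|) for all t ∈ [0,T]. -/
/-!
Write `v_{α,β}(t, r)` for the right-hand side of the receptor system. For `t ∈ [0, T]` it is
Lipschitz in `r` (sup norm on `ℝ × ℝ`) with a constant `K` depending only on
`L, R₁, R₂, d_f, d_b`, and at any point of the box `[0, R₀]²` the two fields `v_{α₁,β₁}` and
`v_{α₂,β₂}` differ by at most `R₀ (R₁ + 1) (|α₁ - α₂| + |β₁ - β₂|)`. So the first solution is an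
approximate trajectory of the second field, and Grönwall's inequality bounds the distance
between the two solutions, which start at the same point, by
`gronwallBound 0 K (R₀ (R₁ + 1) (|α₁ - α₂| + |β₁ - β₂|)) T`, a quantity linear in the defect.
-/

open Set NNReal

theorem gronwallBound_zero_eq_mul (K ε x : ℝ) :
    gronwallBound 0 K ε x = ε * gronwallBound 0 K 1 x := by
  unfold gronwallBound
  split_ifs <;> ring

noncomputable def receptorField (c : ℝ → ℝ) (α β d_f d_b : ℝ) (p : ℝ → ℝ) (t : ℝ)
    (r : ℝ × ℝ) : ℝ × ℝ :=
  (p r.2 - α * c t * r.1 + β * r.2 - d_f * r.1, α * c t * r.1 - β * r.2 - d_b * r.2)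

section receptorField

variable {c p : ℝ → ℝ} {α β d_f d_b t : ℝ}

theorem receptorField_lipschitzWith {Lp K : ℝ≥0} (hp : LipschitzWith Lp p)
    (hK : (Lp : ℝ) + |α * c t| + |β| + |d_f| + |d_b| ≤ K) :
    LipschitzWith K (receptorField c α β d_f d_b p t) := by
  refine LipschitzWith.of_dist_le_mul fun x y => ?_
  have hx₁ : |x.1 - y.1| ≤ dist x y := by
    rw [Prod.dist_eq, ← Real.dist_eq]; exact le_max_left _ _
  have hx₂ : |x.2 - y.2| ≤ dist x y := by
    rw [Prod.dist_eq, ← Real.dist_eq]; exact le_max_right _ _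
  have hp₂ : |p x.2 - p y.2| ≤ Lp * dist x y := by
    have := hp.dist_le_mul x.2 y.2
    rw [Real.dist_eq, Real.dist_eq] at this
    exact this.trans (by gcongr)
  have hscale : ∀ k u : ℝ, |u| ≤ dist x y → |k * u| ≤ |k| * dist x y := fun k u hu =>
    (abs_mul k u).trans_le (mul_le_mul_of_nonneg_left hu (abs_nonneg k))
  have ha := hscale (α * c t) _ hx₁
  have hβ := hscale β _ hx₂
  have hf := hscale d_f _ hx₁
  have hb := hscale d_b _ hx₂
  have hd := dist_nonneg (x := x) (y := y)
  have hK' : ((Lp : ℝ) + |α * c t| + |β| + |d_f| + |d_b|) * dist x y ≤ K * dist x y := by gcongr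
  rw [Prod.dist_eq, Real.dist_eq, Real.dist_eq]
  refine max_le (abs_le.mpr ⟨?_, ?_⟩) (abs_le.mpr ⟨?_, ?_⟩) <;>
  · simp only [receptorField]
    linarith [abs_le.mp hp₂, abs_le.mp ha, abs_le.mp hβ, abs_le.mp hf, abs_le.mp hb,
      mul_nonneg (abs_nonneg d_f) hd, mul_nonneg (abs_nonneg d_b) hd]

theorem dist_receptorField_le {α₁ β₁ α₂ β₂ R₀ R₁ x y : ℝ} (hc : |c t| ≤ R₁)
    (hx : |x| ≤ R₀) (hy : |y| ≤ R₀) :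
    dist (receptorField c α₁ β₁ d_f d_b p t (x, y)) (receptorField c α₂ β₂ d_f d_b p t (x, y))
      ≤ R₀ * (R₁ + 1) * (|α₁ - α₂| + |β₁ - β₂|) := by
  have hR₀ : 0 ≤ R₀ := (abs_nonneg x).trans hx
  have hR₁ : 0 ≤ R₁ := (abs_nonneg _).trans hc
  have hdefect : |(α₁ - α₂) * c t * x - (β₁ - β₂) * y|
      ≤ R₀ * (R₁ + 1) * (|α₁ - α₂| + |β₁ - β₂|) :=
    calc |(α₁ - α₂) * c t * x - (β₁ - β₂) * y|
        ≤ |α₁ - α₂| * |c t| * |x| + |β₁ - β₂| * |y| := by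
          simpa only [abs_mul] using abs_sub ((α₁ - α₂) * c t * x) ((β₁ - β₂) * y)
      _ ≤ |α₁ - α₂| * R₁ * R₀ + |β₁ - β₂| * R₀ := by gcongr
      _ ≤ R₀ * (R₁ + 1) * (|α₁ - α₂| + |β₁ - β₂|) := by
          nlinarith [mul_nonneg hR₀ (abs_nonneg (α₁ - α₂)),
            mul_nonneg (mul_nonneg hR₀ hR₁) (abs_nonneg (β₁ - β₂))]
  rw [Prod.dist_eq, Real.dist_eq, Real.dist_eq]
  refine max_le ?_ ?_
  · rw [← abs_neg]
    refine (congrArg abs ?_).trans_le hdefect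
    simp only [receptorField]
    ring
  · refine (congrArg abs ?_).trans_le hdefect
    simp only [receptorField]
    ring

end receptorField

namespace IsReceptorSolution

variable {T : ℝ} {c p : ℝ → ℝ} {α β d_f d_b rf0 rb0 : ℝ} {rf rb : ℝ → ℝ}

theorem continuousOn (h : IsReceptorSolution T c α β d_f d_b p rf0 rb0 rf rb) :
    ContinuousOn (fun t => (rf t, rb t)) (Icc 0 T) :=
  h.1.continuousOn.prodMk h.2.1.continuousOn

theorem hasDerivWithinAt_Ici (h : IsReceptorSolution T c α β d_f d_b p rf0 rb0 rf rb)
    {t : ℝ} (ht : t ∈ Ico 0 T) :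
    HasDerivWithinAt (fun t => (rf t, rb t)) (receptorField c α β d_f d_b p t (rf t, rb t))
      (Ici t) t :=
  have ht' := Ico_subset_Icc_self ht
  ((h.2.2.1 t ht').prodMk (h.2.2.2.1 t ht')).mono_of_mem_nhdsWithin (Icc_mem_nhdsGE_of_mem ht)

theorem dist_le_gronwallBound {α₁ β₁ α₂ β₂ : ℝ} {rf₁ rb₁ rf₂ rb₂ : ℝ → ℝ} {K : ℝ≥0} {ε : ℝ}
    (h₁ : IsReceptorSolution T c α₁ β₁ d_f d_b p rf0 rb0 rf₁ rb₁)
    (h₂ : IsReceptorSolution T c α₂ β₂ d_f d_b p rf0 rb0 rf₂ rb₂)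
    (hlip : ∀ s ∈ Ico 0 T, LipschitzWith K (receptorField c α₂ β₂ d_f d_b p s))
    (hdefect : ∀ s ∈ Ico 0 T, dist (receptorField c α₁ β₁ d_f d_b p s (rf₁ s, rb₁ s))
      (receptorField c α₂ β₂ d_f d_b p s (rf₁ s, rb₁ s)) ≤ ε)
    {t : ℝ} (ht : t ∈ Icc 0 T) :
    dist (rf₁ t, rb₁ t) (rf₂ t, rb₂ t) ≤ gronwallBound 0 K ε t := by
  have h₀ : dist (rf₁ 0, rb₁ 0) (rf₂ 0, rb₂ 0) ≤ 0 := by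
    rw [h₁.2.2.2.2.1, h₁.2.2.2.2.2, h₂.2.2.2.2.1, h₂.2.2.2.2.2, dist_self]
  simpa only [add_zero, sub_zero] using
    dist_le_of_approx_trajectories_ODE_of_mem (fun s hs => (hlip s hs).lipschitzOnWith)
      h₁.continuousOn (fun s hs => h₁.hasDerivWithinAt_Ici hs) hdefect (fun _ _ => mem_univ _)
      h₂.continuousOn (fun s hs => h₂.hasDerivWithinAt_Ici hs) (fun s _ => (dist_self _).le)
      (fun _ _ => mem_univ _) h₀ t ht

end IsReceptorSolution

theorem stmt_4_general (T d_f d_b L R₀ R₁ R₂ : ℝ)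
    (hdf : 0 ≤ d_f) (hdb : 0 ≤ d_b) (hL : 0 ≤ L)
    (hR₀ : 0 < R₀) (hR₁ : 0 < R₁) (hR₂ : 0 < R₂) :
    ∃ μ : ℝ, ∀ p : ℝ → ℝ, LipschitzWith L.toNNReal p →
      ∀ c : ℝ → ℝ, ContinuousOn c (Icc 0 T) → (∀ t ∈ Icc 0 T, 0 ≤ c t ∧ c t ≤ R₁) →
        ∀ α₁ β₁ α₂ β₂ : ℝ,
          α₁ ∈ Icc 0 R₂ → β₁ ∈ Icc 0 R₂ → α₂ ∈ Icc 0 R₂ → β₂ ∈ Icc 0 R₂ →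
          ∀ rf₁ rb₁ rf₂ rb₂ : ℝ → ℝ,
            IsReceptorSolution T c α₁ β₁ d_f d_b p (rf₁ 0) (rb₁ 0) rf₁ rb₁ →
            IsReceptorSolution T c α₂ β₂ d_f d_b p (rf₂ 0) (rb₂ 0) rf₂ rb₂ →
            rf₁ 0 = rf₂ 0 → rb₁ 0 = rb₂ 0 → 0 ≤ rf₁ 0 → 0 ≤ rb₁ 0 →
            (∀ t ∈ Icc 0 T, 0 ≤ rf₁ t ∧ rf₁ t ≤ R₀) →
            (∀ t ∈ Icc 0 T, 0 ≤ rb₁ t ∧ rb₁ t ≤ R₀) →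
            (∀ t ∈ Icc 0 T, 0 ≤ rf₂ t ∧ rf₂ t ≤ R₀) →
            (∀ t ∈ Icc 0 T, 0 ≤ rb₂ t ∧ rb₂ t ≤ R₀) →
            ∀ t ∈ Icc 0 T,
              |rf₁ t - rf₂ t| + |rb₁ t - rb₂ t| ≤ μ * (|α₁ - α₂| + |β₁ - β₂|) := by
  set K : ℝ≥0 := ⟨L + R₁ * R₂ + R₂ + d_f + d_b, by positivity⟩
  refine ⟨2 * (R₀ * (R₁ + 1)) * gronwallBound 0 K 1 T, ?_⟩
  intro p hp c _ hc α₁ β₁ α₂ β₂ _ _ hα₂ hβ₂ rf₁ rb₁ rf₂ rb₂ hs₁ hs₂ hrf0 hrb0 _ _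
    hrf₁ hrb₁ _ _ t ht
  have habs : ∀ {x R : ℝ}, 0 ≤ x ∧ x ≤ R → |x| ≤ R := fun h => abs_le.mpr ⟨by linarith, h.2⟩
  have hlip : ∀ s ∈ Ico 0 T, LipschitzWith K (receptorField c α₂ β₂ d_f d_b p s) := by
    intro s hs
    refine receptorField_lipschitzWith hp ?_
    have hαc : |α₂| * |c s| ≤ R₁ * R₂ := by
      rw [mul_comm R₁]
      exact mul_le_mul (habs hα₂) (habs (hc s (Ico_subset_Icc_self hs))) (abs_nonneg _) hR₂.le
    rw [Real.coe_toNNReal L hL, abs_mul, abs_of_nonneg hdf, abs_of_nonneg hdb]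
    show _ ≤ L + R₁ * R₂ + R₂ + d_f + d_b
    linarith [habs hβ₂]
  rw [hrf0, hrb0] at hs₁
  have hdist := hs₁.dist_le_gronwallBound hs₂ hlip (fun s hs => dist_receptorField_le
    (habs (hc s (Ico_subset_Icc_self hs))) (habs (hrf₁ s (Ico_subset_Icc_self hs)))
    (habs (hrb₁ s (Ico_subset_Icc_self hs)))) ht
  rw [Prod.dist_eq, Real.dist_eq, Real.dist_eq] at hdist
  have hmono : gronwallBound 0 K (R₀ * (R₁ + 1) * (|α₁ - α₂| + |β₁ - β₂|)) t ≤
      gronwallBound 0 K (R₀ * (R₁ + 1) * (|α₁ - α₂| + |β₁ - β₂|)) T :=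
    gronwallBound_mono le_rfl (by positivity) K.2 ht.2
  rw [gronwallBound_zero_eq_mul _ _ T] at hmono
  linarith [le_max_left |rf₁ t - rf₂ t| |rb₁ t - rb₂ t|,
    le_max_right |rf₁ t - rf₂ t| |rb₁ t - rb₂ t|]

/-- Continuous dependence of the receptor densities on the reaction rates `α, β`:
the constant `μ` depends only on `d_f, d_b, L, R₀, R₁, R₂, T`. -/
theorem stmt_4 (T d_f d_b L R₀ R₁ R₂ : ℝ) (hT : 0 < T)
    (hdf : 0 ≤ d_f) (hdb : 0 ≤ d_b) (hL : 0 ≤ L)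
    (hR₀ : 0 < R₀) (hR₁ : 0 < R₁) (hR₂ : 0 < R₂) :
    ∃ μ : ℝ, ∀ p : ℝ → ℝ, LipschitzWith L.toNNReal p →
      ∀ c : ℝ → ℝ, ContinuousOn c (Icc 0 T) → (∀ t ∈ Icc 0 T, 0 ≤ c t ∧ c t ≤ R₁) →
        ∀ α₁ β₁ α₂ β₂ : ℝ,
          α₁ ∈ Icc 0 R₂ → β₁ ∈ Icc 0 R₂ → α₂ ∈ Icc 0 R₂ → β₂ ∈ Icc 0 R₂ →
          ∀ rf₁ rb₁ rf₂ rb₂ : ℝ → ℝ,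
            IsReceptorSolution T c α₁ β₁ d_f d_b p (rf₁ 0) (rb₁ 0) rf₁ rb₁ →
            IsReceptorSolution T c α₂ β₂ d_f d_b p (rf₂ 0) (rb₂ 0) rf₂ rb₂ →
            rf₁ 0 = rf₂ 0 → rb₁ 0 = rb₂ 0 → 0 ≤ rf₁ 0 → 0 ≤ rb₁ 0 →
            (∀ t ∈ Icc 0 T, 0 ≤ rf₁ t ∧ rf₁ t ≤ R₀) →
            (∀ t ∈ Icc 0 T, 0 ≤ rb₁ t ∧ rb₁ t ≤ R₀) →
            (∀ t ∈ Icc 0 T, 0 ≤ rf₂ t ∧ rf₂ t ≤ R₀) →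
            (∀ t ∈ Icc 0 T, 0 ≤ rb₂ t ∧ rb₂ t ≤ R₀) →
            ∀ t ∈ Icc 0 T,
              |rf₁ t - rf₂ t| + |rb₁ t - rb₂ t| ≤ μ * (|α₁ - α₂| + |β₁ - β₂|) :=
  stmt_4_general T d_f d_b L R₀ R₁ R₂ hdf hdb hL hR₀ hR₁ hR₂
end

section
/- There exists a universal constant C > 0 with the following property. Let r > 0, let N ∈ ℕ, and for each i = 1, …, N let Lᵢ ≥ r, let Qᵢ be an orthogonal 3×3 real matrix, bᵢ ∈ ℝ³, and set Zᵢ = { Qᵢ x + bᵢ : x ∈ C(r, Lᵢ) }, where C(r, L) = { x ∈ ℝ³ : 0 ≤ x₁ ≤ L, x₂² + x₃² ≤ r² }. Put F = Z₁ ∪ … ∪ Z_N and let L = L₁ + … + L_N be the total fibre length. Then for every τ ∈ ℝ³, ∫_{ℝ³} |χ_F(x + τ) − χ_F(x)|² dx ≤ C r L |τ|, where χ_F is the indicator function of F and the integral is with respect to Lebesgue measure; equivalently, the Lebesgue measure of the symmetric difference F Δ (F − τ) is at most C r L |τ|. -/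
/-!
The integrand is the indicator of `(F - τ) ∆ F`, and the measure of this set is at most the sum
of the corresponding measures for the single fibres. A rigid motion `y ↦ Q y + b` preserves
volume and conjugates translation by `τ` into translation by `Qᵀ τ`, a vector of the same length,
so each fibre term is that of the standard cylinder `C(r, Lᵢ)`. This cylinder is an interval times
a disc, so the part of it uncovered by a shift `t = (t₁, t')` lies in a slab of width `|t₁|` over
the disc or in the interval times an annulus of width `|t'|` inside the disc. Its volume is
therefore at most `|t₁| π r² + 2π r Lᵢ |t'| ≤ 3π r Lᵢ |t|` (using `r ≤ Lᵢ`); both halves of the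
symmetric difference give `C = 6π`.
-/

open MeasureTheory Set Matrix

/-- Euclidean norm on `ℝ³` (realized as `Fin 3 → ℝ`). -/
noncomputable def enorm3 (x : Fin 3 → ℝ) : ℝ := Real.sqrt (∑ i, x i ^ 2)

/-- The standard solid cylinder (fibre) of radius `r` and length `L` in `ℝ³`,
with axis along the first coordinate axis. -/
def cyl (r L : ℝ) : Set (Fin 3 → ℝ) :=
  {x | 0 ≤ x 0 ∧ x 0 ≤ L ∧ x 1 ^ 2 + x 2 ^ 2 ≤ r ^ 2}

open scoped symmDiff

section Translation

variable {G : Type*} [AddGroup G]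

lemma preimage_add_image_eq_image_preimage_add {H : Type*} [AddGroup H] {g : G → H} {t : G}
    {τ : H} (hg : ∀ z, g (z + t) = g z + τ) (S : Set G) :
    (· + τ) ⁻¹' (g '' S) = g '' ((· + t) ⁻¹' S) := by
  ext x
  constructor
  · rintro ⟨y, hy, hyx⟩
    refine ⟨y - t, by simpa using hy, ?_⟩
    have := hg (y - t)
    rw [sub_add_cancel, hyx] at this
    exact (add_right_cancel this).symm
  · rintro ⟨z, hz, rfl⟩
    exact ⟨z + t, hz, hg z⟩

variable [MeasurableSpace G]

lemma measure_preimage_add_symmDiff_iUnion_le {ι : Type*} [Fintype ι] (μ : Measure G)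
    (A : ι → Set G) (τ : G) :
    μ (((· + τ) ⁻¹' ⋃ i, A i) ∆ ⋃ i, A i) ≤ ∑ i, μ (((· + τ) ⁻¹' A i) ∆ A i) := by
  rw [preimage_iUnion]
  exact (measure_mono iUnion_symmDiff_iUnion_subset).trans (measure_iUnion_fintype_le μ _)

variable [MeasurableAdd G]

lemma integral_sq_abs_indicator_add_sub_indicator (μ : Measure G) {A : Set G}
    (hA : MeasurableSet A) (τ : G) :
    ∫ x, |A.indicator (fun _ => (1 : ℝ)) (x + τ) - A.indicator (fun _ => (1 : ℝ)) x| ^ 2 ∂μ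
      = μ.real (((· + τ) ⁻¹' A) ∆ A) := by
  have hpoint : ∀ x, |A.indicator (fun _ => (1 : ℝ)) (x + τ) - A.indicator (fun _ => 1) x| ^ 2
      = (((· + τ) ⁻¹' A) ∆ A).indicator (fun _ => 1) x := by
    intro x
    by_cases h₁ : x + τ ∈ A <;> by_cases h₂ : x ∈ A <;> simp [h₁, h₂, mem_symmDiff]
  simp_rw [hpoint]
  rw [integral_indicator_const _ ((hA.preimage (measurable_add_const τ)).symmDiff hA),
    smul_eq_mul, mul_one]

lemma measure_preimage_add_symmDiff_le (μ : Measure G) [μ.IsAddRightInvariant] (A : Set G)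
    (τ : G) :
    μ (((· + τ) ⁻¹' A) ∆ A) ≤ μ (A \ (· + τ) ⁻¹' A) + μ (A \ (· + -τ) ⁻¹' A) := by
  have hshift : (· + τ) ⁻¹' A \ A = (· + τ) ⁻¹' (A \ (· + -τ) ⁻¹' A) := by
    ext x
    simp
  rw [symmDiff_def, hshift, add_comm]
  exact (measure_union_le _ _).trans (by rw [measure_preimage_add_right])

end Translation

lemma Set.prod_diff_preimage_add_subset {α β : Type*} [Add α] [Add β] (s : Set α) (t : Set β)
    (a : α) (b : β) :
    s ×ˢ t \ (· + (a, b)) ⁻¹' (s ×ˢ t) ⊆ (s \ (· + a) ⁻¹' s) ×ˢ t ∪ s ×ˢ (t \ (· + b) ⁻¹' t) := by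
  rintro ⟨x, y⟩ ⟨⟨hx, hy⟩, hxy⟩
  by_cases hxa : x + a ∈ s
  · exact Or.inr ⟨hx, hy, fun hyb => hxy ⟨hxa, hyb⟩⟩
  · exact Or.inl ⟨⟨hx, hxa⟩, hy⟩

lemma MeasureTheory.Measure.prod_diff_preimage_add_le {α β : Type*} [MeasurableSpace α]
    [MeasurableSpace β] [Add α] [Add β] (μ : Measure α) (ν : Measure β) [SFinite ν]
    (s : Set α) (t : Set β) (a : α) (b : β) :
    μ.prod ν (s ×ˢ t \ (· + (a, b)) ⁻¹' (s ×ˢ t))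
      ≤ μ (s \ (· + a) ⁻¹' s) * ν t + μ s * ν (t \ (· + b) ⁻¹' t) := by
  refine (measure_mono (s.prod_diff_preimage_add_subset t a b)).trans ?_
  refine (measure_union_le _ _).trans ?_
  rw [Measure.prod_prod, Measure.prod_prod]

lemma Real.volume_Icc_diff_preimage_add_le (p q a : ℝ) :
    volume (Icc p q \ (· + a) ⁻¹' Icc p q) ≤ ENNReal.ofReal |a| := by
  rcases le_or_gt 0 a with ha | ha
  · have hsub : Icc p q \ (· + a) ⁻¹' Icc p q ⊆ Ioc (q - a) q := by
      rintro x ⟨⟨hpx, hxq⟩, hxa⟩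
      simp only [mem_preimage, mem_Icc, not_and_or, not_le] at hxa
      exact ⟨by rcases hxa with h | h <;> linarith, hxq⟩
    simpa [abs_of_nonneg ha] using measure_mono (μ := volume) hsub
  · have hsub : Icc p q \ (· + a) ⁻¹' Icc p q ⊆ Ico p (p - a) := by
      rintro x ⟨⟨hpx, hxq⟩, hxa⟩
      simp only [mem_preimage, mem_Icc, not_and_or, not_le] at hxa
      exact ⟨hpx, by rcases hxa with h | h <;> linarith⟩
    simpa [abs_of_neg ha] using measure_mono (μ := volume) hsub

lemma closedBall_diff_preimage_add_subset {E : Type*} [SeminormedAddCommGroup E] (x v : E)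
    (r : ℝ) :
    Metric.closedBall x r \ (· + v) ⁻¹' Metric.closedBall x r
      ⊆ Metric.closedBall x r \ Metric.closedBall x (r - ‖v‖) := by
  refine sdiff_subset_sdiff_right fun y hy => ?_
  rw [Metric.mem_closedBall] at hy
  rw [mem_preimage, Metric.mem_closedBall]
  calc dist (y + v) x ≤ dist (y + v) y + dist y x := dist_triangle _ _ _
    _ = ‖v‖ + dist y x := by rw [dist_self_add_left]
    _ ≤ r := by linarith

lemma EuclideanSpace.volume_closedBall_diff_closedBall_sub_le (x : EuclideanSpace ℝ (Fin 2))
    {r s : ℝ} (hs : 0 ≤ s) (hsr : s ≤ r) :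
    volume (Metric.closedBall x r \ Metric.closedBall x (r - s))
      ≤ ENNReal.ofReal (2 * Real.pi * r * s) := by
  rw [measure_sdiff_le_iff_le_add measurableSet_closedBall.nullMeasurableSet
    (Metric.closedBall_subset_closedBall (by linarith)) measure_closedBall_lt_top.ne,
    volume_closedBall_fin_two, volume_closedBall_fin_two, ← ENNReal.ofReal_pow (by linarith),
    ← ENNReal.ofReal_pow (by linarith), ← ENNReal.ofReal_mul (sq_nonneg _),
    ← ENNReal.ofReal_mul (sq_nonneg _), ← ENNReal.ofReal_add (by positivity)
      (by have : 0 ≤ r := hs.trans hsr; positivity)]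
  exact ENNReal.ofReal_le_ofReal (by nlinarith [mul_nonneg Real.pi_pos.le (sq_nonneg s)])

lemma EuclideanSpace.volume_closedBall_diff_preimage_add_le (x v : EuclideanSpace ℝ (Fin 2))
    {r : ℝ} (hr : 0 ≤ r) :
    volume (Metric.closedBall x r \ (· + v) ⁻¹' Metric.closedBall x r)
      ≤ ENNReal.ofReal (2 * Real.pi * r * ‖v‖) := by
  rcases le_or_gt ‖v‖ r with hvr | hrv
  · exact (measure_mono (closedBall_diff_preimage_add_subset x v r)).trans
      (volume_closedBall_diff_closedBall_sub_le x (norm_nonneg v) hvr)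
  · refine (measure_mono sdiff_subset).trans ?_
    rw [volume_closedBall_fin_two, ← ENNReal.ofReal_pow hr, ← ENNReal.ofReal_mul (sq_nonneg _)]
    exact ENNReal.ofReal_le_ofReal
      (by nlinarith [Real.pi_pos, mul_le_mul_of_nonneg_left hrv.le hr])

noncomputable def axialSplit : (Fin 3 → ℝ) ≃ᵐ ℝ × EuclideanSpace ℝ (Fin 2) :=
  (MeasurableEquiv.piFinSuccAbove (fun _ => ℝ) 0).trans
    (MeasurableEquiv.prodCongr (MeasurableEquiv.refl ℝ) (MeasurableEquiv.toLp 2 (Fin 2 → ℝ)))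

lemma axialSplit_apply (y : Fin 3 → ℝ) :
    axialSplit y = (y 0, WithLp.toLp 2 (Fin.tail y)) := rfl

lemma axialSplit_add (y t : Fin 3 → ℝ) : axialSplit (y + t) = axialSplit y + axialSplit t := by
  simp only [axialSplit_apply, Pi.add_apply, Prod.mk_add_mk, ← WithLp.toLp_add]
  rfl

lemma measurePreserving_axialSplit : MeasurePreserving axialSplit :=
  (volume_preserving_piFinSuccAbove (fun _ : Fin 3 => ℝ) 0).trans
    ((MeasurePreserving.id volume).prod (PiLp.volume_preserving_toLp (Fin 2)))

lemma norm_axialSplit_snd_sq (y : Fin 3 → ℝ) : ‖(axialSplit y).2‖ ^ 2 = y 1 ^ 2 + y 2 ^ 2 := by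
  rw [EuclideanSpace.norm_eq, Real.sq_sqrt (by positivity)]
  simp [axialSplit_apply, Fin.sum_univ_two, Fin.tail]

lemma enorm3_nonneg (y : Fin 3 → ℝ) : 0 ≤ enorm3 y := Real.sqrt_nonneg _

lemma enorm3_neg (y : Fin 3 → ℝ) : enorm3 (-y) = enorm3 y := by
  simp [enorm3]

lemma enorm3_sq (y : Fin 3 → ℝ) :
    enorm3 y ^ 2 = (axialSplit y).1 ^ 2 + ‖(axialSplit y).2‖ ^ 2 := by
  rw [enorm3, Real.sq_sqrt (by positivity), norm_axialSplit_snd_sq, Fin.sum_univ_three, add_assoc]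
  rfl

lemma abs_axialSplit_fst_le_enorm3 (y : Fin 3 → ℝ) : |(axialSplit y).1| ≤ enorm3 y :=
  (sq_le_sq₀ (abs_nonneg _) (enorm3_nonneg y)).1
    (by rw [sq_abs, enorm3_sq]; exact le_add_of_nonneg_right (sq_nonneg _))

lemma norm_axialSplit_snd_le_enorm3 (y : Fin 3 → ℝ) : ‖(axialSplit y).2‖ ≤ enorm3 y :=
  (sq_le_sq₀ (norm_nonneg _) (enorm3_nonneg y)).1
    (by rw [enorm3_sq]; exact le_add_of_nonneg_left (sq_nonneg _))

lemma measurableSet_cyl (r L : ℝ) : MeasurableSet (cyl r L) := by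
  unfold cyl
  measurability

lemma cyl_eq_preimage_axialSplit {r : ℝ} (hr : 0 ≤ r) (L : ℝ) :
    cyl r L = axialSplit ⁻¹' (Icc 0 L ×ˢ Metric.closedBall 0 r) := by
  ext y
  rw [mem_preimage, mem_prod, mem_closedBall_zero_iff, ← sq_le_sq₀ (norm_nonneg _) hr,
    norm_axialSplit_snd_sq]
  simp [cyl, axialSplit_apply, and_assoc]

lemma volume_cyl_diff_preimage_add_le {r L : ℝ} (hr : 0 ≤ r) (hrL : r ≤ L) (t : Fin 3 → ℝ) :
    volume (cyl r L \ (· + t) ⁻¹' cyl r L)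
      ≤ ENNReal.ofReal (3 * Real.pi * r * L * enorm3 t) := by
  have hL : 0 ≤ L := hr.trans hrL
  have ht₁ := abs_axialSplit_fst_le_enorm3 t
  have ht₂ := norm_axialSplit_snd_le_enorm3 t
  have hshift : (· + t) ⁻¹' cyl r L
      = axialSplit ⁻¹' ((· + axialSplit t) ⁻¹' (Icc 0 L ×ˢ Metric.closedBall 0 r)) := by
    ext y
    simp [cyl_eq_preimage_axialSplit hr, axialSplit_add]
  rw [hshift, cyl_eq_preimage_axialSplit hr, ← preimage_sdiff,
    measurePreserving_axialSplit.measure_preimage_equiv, Measure.volume_eq_prod]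
  calc _ ≤ _ := Measure.prod_diff_preimage_add_le _ _ _ _ _ _
    _ ≤ ENNReal.ofReal |(axialSplit t).1| * ENNReal.ofReal (r ^ 2 * Real.pi)
        + ENNReal.ofReal L * ENNReal.ofReal (2 * Real.pi * r * ‖(axialSplit t).2‖) := by
      gcongr
      · exact Real.volume_Icc_diff_preimage_add_le _ _ _
      · rw [EuclideanSpace.volume_closedBall_fin_two, ← ENNReal.ofReal_pow hr,
          ← ENNReal.ofReal_mul (sq_nonneg _)]
      · rw [Real.volume_Icc, sub_zero]
      · exact EuclideanSpace.volume_closedBall_diff_preimage_add_le _ _ hr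
    _ ≤ ENNReal.ofReal (3 * Real.pi * r * L * enorm3 t) := by
      rw [← ENNReal.ofReal_mul (abs_nonneg _), ← ENNReal.ofReal_mul hL,
        ← ENNReal.ofReal_add (by positivity) (by positivity)]
      refine ENNReal.ofReal_le_ofReal ?_
      have h₁ : |(axialSplit t).1| * (r ^ 2 * Real.pi) ≤ enorm3 t * (r * L * Real.pi) :=
        mul_le_mul ht₁ (by gcongr; nlinarith) (by positivity) (enorm3_nonneg t)
      have h₂ : L * (2 * Real.pi * r * ‖(axialSplit t).2‖)
          ≤ L * (2 * Real.pi * r * enorm3 t) := by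
        gcongr
      nlinarith

lemma volume_preimage_add_symmDiff_cyl_le {r L : ℝ} (hr : 0 ≤ r) (hrL : r ≤ L)
    (t : Fin 3 → ℝ) :
    volume (((· + t) ⁻¹' cyl r L) ∆ cyl r L)
      ≤ ENNReal.ofReal (6 * Real.pi * r * L * enorm3 t) := by
  have hL : 0 ≤ L := hr.trans hrL
  have ht : 0 ≤ enorm3 t := enorm3_nonneg t
  refine (measure_preimage_add_symmDiff_le volume _ t).trans ?_
  refine (add_le_add (volume_cyl_diff_preimage_add_le hr hrL t)
    (volume_cyl_diff_preimage_add_le hr hrL (-t))).trans_eq ?_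
  rw [enorm3_neg, ← ENNReal.ofReal_add (by positivity) (by positivity)]
  ring_nf

section RigidMotion

variable {n : Type*} [Fintype n] [DecidableEq n] {Q : Matrix n n ℝ}

lemma abs_det_eq_one_of_transpose_mul_self (hQ : Qᵀ * Q = 1) : |Q.det| = 1 := by
  have h : Q.det * Q.det = 1 := by
    simpa [Matrix.det_mul, Matrix.det_transpose] using congrArg Matrix.det hQ
  rcases mul_self_eq_one_iff.mp h with h | h <;> simp [h]

lemma injective_mulVec_add (hQ : Qᵀ * Q = 1) (b : n → ℝ) :
    Function.Injective fun y => Q *ᵥ y + b := fun y y' h => by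
  simpa [mulVec_mulVec, hQ] using congrArg (Qᵀ *ᵥ ·) (add_right_cancel h)

lemma volume_image_mulVec_add (hQ : Qᵀ * Q = 1) (b : n → ℝ) (S : Set (n → ℝ)) :
    volume ((fun y => Q *ᵥ y + b) '' S) = volume S := by
  have hlin : (Q *ᵥ ·) = Matrix.toLin' Q := funext fun v => (toLin'_apply Q v).symm
  rw [← image_image (· + b) (Q *ᵥ ·), image_add_right, measure_preimage_add_right, hlin,
    Measure.addHaar_image_linearMap, LinearMap.det_toLin',
    abs_det_eq_one_of_transpose_mul_self hQ, ENNReal.ofReal_one, one_mul]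

lemma volume_preimage_add_symmDiff_image_mulVec_add (hQ : Qᵀ * Q = 1) (b τ : n → ℝ)
    (S : Set (n → ℝ)) :
    volume (((· + τ) ⁻¹' ((fun y => Q *ᵥ y + b) '' S)) ∆ ((fun y => Q *ᵥ y + b) '' S))
      = volume (((· + Qᵀ *ᵥ τ) ⁻¹' S) ∆ S) := by
  have hQQ : Q * Qᵀ = 1 := mul_eq_one_comm.mp hQ
  have hshift : ∀ z, Q *ᵥ (z + Qᵀ *ᵥ τ) + b = Q *ᵥ z + b + τ := fun z => by
    rw [mulVec_add, mulVec_mulVec, hQQ, one_mulVec, add_right_comm]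
  rw [preimage_add_image_eq_image_preimage_add hshift,
    ← image_symmDiff (injective_mulVec_add hQ b), volume_image_mulVec_add hQ]

end RigidMotion

lemma enorm3_transpose_mulVec {Q : Matrix (Fin 3) (Fin 3) ℝ} (hQ : Qᵀ * Q = 1)
    (τ : Fin 3 → ℝ) : enorm3 (Qᵀ *ᵥ τ) = enorm3 τ := by
  have hQQ : Q * Qᵀ = 1 := mul_eq_one_comm.mp hQ
  have hdot : ∀ v : Fin 3 → ℝ, ∑ i, v i ^ 2 = v ⬝ᵥ v := fun v => by simp [dotProduct, sq]
  rw [enorm3, enorm3, hdot, hdot, dotProduct_mulVec, vecMul_transpose, mulVec_mulVec, hQQ,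
    one_mulVec]

/-- L²-modulus of continuity under translation of the characteristic function of a
fibre system: a universal constant `C > 0` such that for any finite union `F` of rigidly
moved cylinders of radius `r` and lengths `Lᵢ ≥ r`,
`∫ |χ_F(x+τ) − χ_F(x)|² dx ≤ C r L |τ|`, with `L` the total fibre length. -/
theorem stmt_5 :
    ∃ C : ℝ, 0 < C ∧
      ∀ (r : ℝ), 0 < r → ∀ (N : ℕ) (L : Fin N → ℝ), (∀ i, r ≤ L i) →
        ∀ (Q : Fin N → Matrix (Fin 3) (Fin 3) ℝ), (∀ i, (Q i)ᵀ * Q i = 1) →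
          ∀ (b : Fin N → (Fin 3 → ℝ)) (τ : Fin 3 → ℝ),
            (∫ x : Fin 3 → ℝ,
                |Set.indicator (⋃ i, (fun y => (Q i).mulVec y + b i) '' cyl r (L i))
                    (fun _ => (1 : ℝ)) (x + τ) -
                  Set.indicator (⋃ i, (fun y => (Q i).mulVec y + b i) '' cyl r (L i))
                    (fun _ => (1 : ℝ)) x| ^ 2) ≤
              C * r * (∑ i, L i) * enorm3 τ := by
  refine ⟨6 * Real.pi, by positivity, fun r hr N L hL Q hQ b τ => ?_⟩
  have hZ : ∀ i, MeasurableSet ((fun y => Q i *ᵥ y + b i) '' cyl r (L i)) := fun i =>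
    (measurableSet_cyl r (L i)).image_of_continuousOn_injOn (by fun_prop)
      (injective_mulVec_add (hQ i) (b i)).injOn
  rw [integral_sq_abs_indicator_add_sub_indicator volume (MeasurableSet.iUnion hZ)]
  have hsum : 0 ≤ ∑ i, L i := Finset.sum_nonneg fun i _ => hr.le.trans (hL i)
  refine ENNReal.toReal_le_of_le_ofReal (by have := enorm3_nonneg τ; positivity) ?_
  calc _ ≤ _ := measure_preimage_add_symmDiff_iUnion_le volume _ τ
    _ = ∑ i, volume (((· + (Q i)ᵀ *ᵥ τ) ⁻¹' cyl r (L i)) ∆ cyl r (L i)) :=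
      Finset.sum_congr rfl fun i _ => volume_preimage_add_symmDiff_image_mulVec_add (hQ i) _ _ _
    _ ≤ ∑ i, ENNReal.ofReal (6 * Real.pi * r * L i * enorm3 τ) := Finset.sum_le_sum fun i _ =>
      (enorm3_transpose_mulVec (hQ i) τ) ▸ volume_preimage_add_symmDiff_cyl_le hr.le (hL i) _
    _ = ENNReal.ofReal (6 * Real.pi * r * (∑ i, L i) * enorm3 τ) := by
      rw [← ENNReal.ofReal_sum_of_nonneg fun i _ => by
        have := enorm3_nonneg τ; have := hr.le.trans (hL i); positivity]
      simp_rw [Finset.mul_sum, Finset.sum_mul]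
end

section
/- Let M ≥ 1 and let D be an invertible 3×3 real matrix with ‖D‖ ≤ M and ‖D⁻¹‖ ≤ M (operator norms). Then there is a constant C, depending only on M, with the following property: for every ε > 0, every ℓ ≥ ε, and every nonempty set Q ⊂ ℝ³ of diameter at most ℓ, the set { ξ ∈ ℤ³ : (ε D ((0,1)³ + ξ)) ∩ Q ≠ ∅ } is finite and its cardinality is at most C (ℓ/ε)³, where ε D ((0,1)³ + ξ) = { ε D (y + ξ) : y ∈ (0,1)³ }. -/
open MeasureTheory Set Matrix

/-- The (Euclidean) operator norm of a `3 × 3` real matrix. -/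
noncomputable def opNorm3 (A : Matrix (Fin 3) (Fin 3) ℝ) : ℝ :=
  ‖(Matrix.toEuclideanCLM (𝕜 := ℝ) A : EuclideanSpace ℝ (Fin 3) →L[ℝ] EuclideanSpace ℝ (Fin 3))‖

/-- The open unit cube `(0,1)³` in `ℝ³`. -/
def unitCube : Set (Fin 3 → ℝ) := {y | ∀ i, y i ∈ Ioo (0 : ℝ) 1}

/-!
If the cell `ε D ((0,1)³ + ξ)` contains `x`, then `ξ = ε⁻¹ D⁻¹ x - y` with `y ∈ (0,1)³`. Fixing
`q ∈ Q`, every such `ξ` therefore lies within `R = M ℓ / ε + √3` of `ε⁻¹ D⁻¹ q` in each coordinate,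
and a box of half-width `R` holds at most `(2R + 1)³` lattice points. As `ℓ / ε ≥ 1`, this is
at most `(2M + 2√3 + 1)³ (ℓ / ε)³`.
-/

lemma enorm3_eq_norm (x : Fin 3 → ℝ) : enorm3 x = ‖WithLp.toLp 2 x‖ := by
  simp [enorm3, EuclideanSpace.norm_eq, sq_abs]

lemma enorm3_sub_le (x y : Fin 3 → ℝ) : enorm3 (x - y) ≤ enorm3 x + enorm3 y := by
  simpa only [enorm3_eq_norm, WithLp.toLp_sub] using norm_sub_le _ _

lemma enorm3_smul (s : ℝ) (x : Fin 3 → ℝ) : enorm3 (s • x) = |s| * enorm3 x := by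
  simp only [enorm3_eq_norm, WithLp.toLp_smul, norm_smul, Real.norm_eq_abs]

lemma enorm3_mulVec_le (A : Matrix (Fin 3) (Fin 3) ℝ) (x : Fin 3 → ℝ) :
    enorm3 (A *ᵥ x) ≤ opNorm3 A * enorm3 x := by
  simpa only [enorm3_eq_norm, opNorm3, toEuclideanCLM_toLp] using
    (toEuclideanCLM (𝕜 := ℝ) A).le_opNorm (WithLp.toLp 2 x)

lemma abs_apply_le_enorm3 (x : Fin 3 → ℝ) (i : Fin 3) : |x i| ≤ enorm3 x := by
  simpa only [enorm3_eq_norm, Real.norm_eq_abs] using PiLp.norm_apply_le (WithLp.toLp 2 x) i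

lemma enorm3_le_sqrt_three_of_mem_unitCube {y : Fin 3 → ℝ} (hy : y ∈ unitCube) :
    enorm3 y ≤ √3 := by
  refine Real.sqrt_le_sqrt ?_
  calc ∑ i, y i ^ 2 ≤ ∑ _i : Fin 3, (1 : ℝ) :=
        Finset.sum_le_sum fun i _ => by nlinarith [(hy i).1, (hy i).2]
    _ = 3 := by simp

lemma Int.card_Icc_ceil_floor_le {a b : ℝ} (hab : a ≤ b + 1) :
    ((Finset.Icc ⌈a⌉ ⌊b⌋).card : ℝ) ≤ b - a + 1 := by
  have hcard : ((Finset.Icc ⌈a⌉ ⌊b⌋).card : ℤ) = max (⌊b⌋ + 1 - ⌈a⌉) 0 := by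
    rw [Int.card_Icc, Int.toNat_eq_max]
  rw [← Int.cast_natCast, hcard]
  push_cast
  exact max_le (by linarith [Int.floor_le b, Int.le_ceil a]) (by linarith)

lemma exists_finite_card_le_of_forall_abs_sub_le {ι : Type*} [Fintype ι] {S : Set (ι → ℤ)}
    {c : ι → ℝ} {R : ℝ} (hR : 0 ≤ R) (hS : ∀ ξ ∈ S, ∀ i, |(ξ i : ℝ) - c i| ≤ R) :
    ∃ hfin : S.Finite, (hfin.toFinset.card : ℝ) ≤ (2 * R + 1) ^ Fintype.card ι := by
  classical
  set box := Fintype.piFinset fun i => Finset.Icc ⌈c i - R⌉ ⌊c i + R⌋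
  have hsub : S ⊆ box := by
    intro ξ hξ
    simp only [box, Finset.mem_coe, Fintype.mem_piFinset, Finset.mem_Icc, Int.ceil_le,
      Int.le_floor]
    intro i
    have := abs_le.mp (hS ξ hξ i)
    constructor <;> linarith
  have hfin := box.finite_toSet.subset hsub
  refine ⟨hfin, ?_⟩
  calc (hfin.toFinset.card : ℝ) ≤ box.card := by
        exact_mod_cast Finset.card_le_card (hfin.toFinset_subset.mpr hsub)
    _ = ∏ i, ((Finset.Icc ⌈c i - R⌉ ⌊c i + R⌋).card : ℝ) := by
        rw [Fintype.card_piFinset]; push_cast; rfl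
    _ ≤ ∏ _i : ι, (2 * R + 1) := Finset.prod_le_prod (fun _ _ => by positivity) fun i _ =>
        (Int.card_Icc_ceil_floor_le (by linarith)).trans_eq (by ring)
    _ = (2 * R + 1) ^ Fintype.card ι := Finset.prod_const _

lemma abs_sub_le_of_mem_cell {D : Matrix (Fin 3) (Fin 3) ℝ} (hD : IsUnit D) {ε : ℝ} (hε : 0 < ε)
    (ξ : Fin 3 → ℤ) {y : Fin 3 → ℝ} (hy : y ∈ unitCube) (q : Fin 3 → ℝ) (i : Fin 3) :
    |(ξ i : ℝ) - (ε⁻¹ • D⁻¹ *ᵥ q) i| ≤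
      opNorm3 D⁻¹ * (enorm3 (ε • D *ᵥ (y + fun j => (ξ j : ℝ)) - q) / ε) + √3 := by
  set x := ε • D *ᵥ (y + fun j => (ξ j : ℝ))
  have hx : ε⁻¹ • D⁻¹ *ᵥ x = y + fun j => (ξ j : ℝ) := by
    rw [mulVec_smul, mulVec_mulVec, nonsing_inv_mul D ((isUnit_iff_isUnit_det D).mp hD),
      one_mulVec, smul_smul, inv_mul_cancel₀ hε.ne', one_smul]
  have hdiff : (fun j => (ξ j : ℝ)) - ε⁻¹ • D⁻¹ *ᵥ q = ε⁻¹ • D⁻¹ *ᵥ (x - q) - y := by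
    rw [mulVec_sub, smul_sub, hx]
    abel
  calc |(ξ i : ℝ) - (ε⁻¹ • D⁻¹ *ᵥ q) i|
      ≤ enorm3 (ε⁻¹ • D⁻¹ *ᵥ (x - q) - y) := by
        rw [← hdiff]; exact abs_apply_le_enorm3 ((fun j => (ξ j : ℝ)) - ε⁻¹ • D⁻¹ *ᵥ q) i
    _ ≤ enorm3 (ε⁻¹ • D⁻¹ *ᵥ (x - q)) + enorm3 y := enorm3_sub_le _ _
    _ ≤ ε⁻¹ * (opNorm3 D⁻¹ * enorm3 (x - q)) + √3 := by
        rw [enorm3_smul, abs_of_pos (inv_pos.mpr hε)]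
        gcongr
        · exact enorm3_mulVec_le _ _
        · exact enorm3_le_sqrt_three_of_mem_unitCube hy
    _ = _ := by ring

theorem stmt_8_general (M : ℝ) :
    ∃ C : ℝ, ∀ D : Matrix (Fin 3) (Fin 3) ℝ, IsUnit D →
      opNorm3 D ≤ M → opNorm3 D⁻¹ ≤ M →
      ∀ ε : ℝ, 0 < ε → ∀ ℓ : ℝ, ε ≤ ℓ →
        ∀ Q : Set (Fin 3 → ℝ), Q.Nonempty → (∀ x ∈ Q, ∀ y ∈ Q, enorm3 (x - y) ≤ ℓ) →
          ∃ hfin : {ξ : Fin 3 → ℤ |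
              (((fun y => ε • D.mulVec (y + fun i => (ξ i : ℝ))) '' unitCube) ∩ Q).Nonempty}.Finite,
            (hfin.toFinset.card : ℝ) ≤ C * (ℓ / ε) ^ 3 := by
  refine ⟨(2 * M + 2 * √3 + 1) ^ 3, ?_⟩
  intro D hD _ hDinv ε hε ℓ hℓ Q ⟨q, hq⟩ hQ
  have ht : 1 ≤ ℓ / ε := (one_le_div hε).mpr hℓ
  have hM : 0 ≤ M := (norm_nonneg _).trans hDinv
  have hcells : ∀ ξ ∈ {ξ : Fin 3 → ℤ |
      (((fun y => ε • D.mulVec (y + fun i => (ξ i : ℝ))) '' unitCube) ∩ Q).Nonempty},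
      ∀ i, |(ξ i : ℝ) - (ε⁻¹ • D⁻¹ *ᵥ q) i| ≤ M * (ℓ / ε) + √3 := by
    rintro ξ ⟨_, ⟨y, hy, rfl⟩, hxQ⟩ i
    refine (abs_sub_le_of_mem_cell hD hε ξ hy q i).trans ?_
    gcongr
    · exact div_nonneg (Real.sqrt_nonneg _) hε.le
    · exact hQ _ hxQ _ hq
  obtain ⟨hfin, hcard⟩ := exists_finite_card_le_of_forall_abs_sub_le (by positivity) hcells
  refine ⟨hfin, hcard.trans ?_⟩
  rw [Fintype.card_fin, ← mul_pow]
  gcongr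
  nlinarith [Real.sqrt_nonneg 3]

/-- Counting lemma: the number of transformed cells `ε D ((0,1)³ + ξ)`, `ξ ∈ ℤ³`, meeting a
set of diameter at most `ℓ ≥ ε` is at most `C (ℓ/ε)³`, with `C` depending only on the bound
`M` on `‖D‖` and `‖D⁻¹‖`. -/
theorem stmt_8 (M : ℝ) (hM : 1 ≤ M) :
    ∃ C : ℝ, ∀ D : Matrix (Fin 3) (Fin 3) ℝ, IsUnit D →
      opNorm3 D ≤ M → opNorm3 D⁻¹ ≤ M →
      ∀ ε : ℝ, 0 < ε → ∀ ℓ : ℝ, ε ≤ ℓ →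
        ∀ Q : Set (Fin 3 → ℝ), Q.Nonempty → (∀ x ∈ Q, ∀ y ∈ Q, enorm3 (x - y) ≤ ℓ) →
          ∃ hfin : {ξ : Fin 3 → ℤ |
              (((fun y => ε • D.mulVec (y + fun i => (ξ i : ℝ))) '' unitCube) ∩ Q).Nonempty}.Finite,
            (hfin.toFinset.card : ℝ) ≤ C * (ℓ / ε) ^ 3 :=
  stmt_8_general M
end
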